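/- arXiv:1912.09763 — 8 statements merged into one kernel-verified Lean document; each statement's English description precedes it below -/
import Mathlib

section
/- Let G be a finite abelian group that is a direct sum of m cyclic groups. Then the number κ(G) of direct summands in a primary decomposition of G (a decomposition into cyclic groups of prime-power order) is at most Ω_m(|G|). -/
open Finset

/-! For a prime `p`, every summand `ℤ/q_i` with `p ∣ q_i` contributes at least one to `v_p(|G|)`
and a factor at least `p` to the number of solutions of `g ^ p = 1` in `G`, while a product of
`m` cyclic groups has at most `p ^ m` such solutions. So at most `min (v_p(|G|)) m` summands are
`p`-primary, and summing over the primes dividing `|G|` bounds their number. -/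

/-- The truncated prime `Ω`-function: `Ω_m(z) = ∑_p min(v_p(z), m)`. -/
def truncatedOmega (m z : ℕ) : ℕ := ∑ p ∈ z.primeFactors, min (z.factorization p) m

section TorsionCount

variable {G H : Type*}

theorem MulEquiv.card_pow_eq_one [Monoid G] [Monoid H] (e : G ≃* H) (n : ℕ) :
    Nat.card {g : G // g ^ n = 1} = Nat.card {h : H // h ^ n = 1} :=
  Nat.card_congr <| e.toEquiv.subtypeEquiv fun g => by simp [← map_pow]

theorem Pi.card_pow_eq_one {ι : Type*} [Fintype ι] (A : ι → Type*) [∀ i, Monoid (A i)] (n : ℕ) :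
    Nat.card {f : ∀ i, A i // f ^ n = 1} = ∏ i, Nat.card {a : A i // a ^ n = 1} := by
  rw [← Nat.card_pi]
  exact Nat.card_congr <|
    (Equiv.subtypeEquivRight fun f => by simp [funext_iff]).trans Equiv.subtypePiEquivPi

theorem le_card_pow_eq_one_of_prime_dvd [Group G] [Finite G] {p : ℕ} (hp : p.Prime)
    (hdvd : p ∣ Nat.card G) : p ≤ Nat.card {g : G // g ^ p = 1} := by
  have := Fact.mk hp
  obtain ⟨g, hg⟩ := exists_prime_orderOf_dvd_card' p hdvd
  calc p = Nat.card (Subgroup.zpowers g) := by rw [Nat.card_zpowers, hg]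
    _ ≤ Nat.card {x : G | x ^ p = 1} := Nat.card_mono (Set.toFinite _) fun x hx =>
      orderOf_dvd_iff_pow_eq_one.mp (hg ▸ orderOf_dvd_of_mem_zpowers hx)

theorem IsCyclic.natCard_pow_eq_one_le [Group G] [Finite G] [IsCyclic G] {n : ℕ} (hn : 0 < n) :
    Nat.card {g : G // g ^ n = 1} ≤ n := by
  classical
  have := Fintype.ofFinite G
  rw [Nat.card_eq_fintype_card, Fintype.card_subtype]
  exact IsCyclic.card_pow_eq_one_le hn

theorem Pi.card_pow_eq_one_le_pow_of_isCyclic {ι : Type*} [Fintype ι] (A : ι → Type*)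
    [∀ i, Group (A i)] [∀ i, Finite (A i)] [∀ i, IsCyclic (A i)] {n : ℕ} (hn : 0 < n) :
    Nat.card {f : ∀ i, A i // f ^ n = 1} ≤ n ^ Fintype.card ι := by
  rw [Pi.card_pow_eq_one, ← Finset.card_univ]
  exact Finset.prod_le_pow_card _ _ _ fun i _ => IsCyclic.natCard_pow_eq_one_le hn

end TorsionCount

theorem Nat.card_multiplicative_zmod (n : ℕ) : Nat.card (Multiplicative (ZMod n)) = n :=
  (Nat.card_congr Multiplicative.toAdd).trans (Nat.card_zmod n)

theorem pow_card_filter_dvd_le_card_pow_eq_one {ι : Type*} [Fintype ι] (q : ι → ℕ)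
    [∀ i, NeZero (q i)] {p : ℕ} (hp : p.Prime) :
    p ^ #{i | p ∣ q i} ≤ Nat.card {f : ∀ i, Multiplicative (ZMod (q i)) // f ^ p = 1} := by
  rw [Pi.card_pow_eq_one]
  calc p ^ #{i | p ∣ q i}
      ≤ ∏ i ∈ {i | p ∣ q i}, Nat.card {x : Multiplicative (ZMod (q i)) // x ^ p = 1} :=
        Finset.pow_card_le_prod _ _ _ fun i hi => le_card_pow_eq_one_of_prime_dvd hp <| by
          simpa [Nat.card_multiplicative_zmod] using hi
    _ ≤ ∏ i, Nat.card {x : Multiplicative (ZMod (q i)) // x ^ p = 1} :=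
        Finset.prod_le_prod_of_subset_of_one_le' (Finset.subset_univ _) fun i _ _ =>
          Nat.card_pos_iff.mpr ⟨⟨⟨1, one_pow p⟩⟩, inferInstance⟩

theorem card_filter_dvd_le_of_mulEquiv {G ι : Type*} [Group G] [Finite G] [Fintype ι] {m : ℕ}
    {d : Fin m → ℕ} {q : ι → ℕ} [∀ i, NeZero (q i)]
    (e : G ≃* ((i : Fin m) → Multiplicative (ZMod (d i))))
    (f : G ≃* ((i : ι) → Multiplicative (ZMod (q i)))) {p : ℕ} (hp : p.Prime) :
    #{i | p ∣ q i} ≤ m := by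
  have : Finite ((i : Fin m) → Multiplicative (ZMod (d i))) := Finite.of_equiv G e.toEquiv
  have (i : Fin m) : Finite (Multiplicative (ZMod (d i))) :=
    Finite.of_surjective _
      (Function.surjective_eval (β := fun j => Multiplicative (ZMod (d j))) i)
  refine (Nat.pow_le_pow_iff_right hp.one_lt).mp ?_
  calc p ^ #{i | p ∣ q i}
      ≤ Nat.card {x : (i : ι) → Multiplicative (ZMod (q i)) // x ^ p = 1} :=
        pow_card_filter_dvd_le_card_pow_eq_one q hp
    _ = Nat.card {x : (i : Fin m) → Multiplicative (ZMod (d i)) // x ^ p = 1} := by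
        rw [← f.card_pow_eq_one, e.card_pow_eq_one]
    _ ≤ p ^ m := by
        simpa using Pi.card_pow_eq_one_le_pow_of_isCyclic
          (fun i : Fin m => Multiplicative (ZMod (d i))) hp.pos

theorem card_filter_dvd_le_factorization_prod {ι : Type*} [Fintype ι] {q : ι → ℕ}
    (hq : ∀ i, q i ≠ 0) {p : ℕ} (hp : p.Prime) :
    #{i | p ∣ q i} ≤ (∏ i, q i).factorization p := by
  rw [Nat.factorization_prod fun i _ => hq i, Finset.sum_apply', Finset.card_eq_sum_ones]
  calc ∑ i ∈ {i | p ∣ q i}, 1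
      ≤ ∑ i ∈ {i | p ∣ q i}, (q i).factorization p :=
        Finset.sum_le_sum fun i hi => hp.factorization_pos_of_dvd (hq i) (by simpa using hi)
    _ ≤ ∑ i, (q i).factorization p := Finset.sum_le_sum_of_subset (Finset.subset_univ _)

theorem card_le_sum_card_filter_dvd_of_isPrimePow {ι : Type*} [Fintype ι] {q : ι → ℕ}
    (hq : ∀ i, IsPrimePow (q i)) :
    Fintype.card ι ≤ ∑ p ∈ (∏ i, q i).primeFactors, #{i | p ∣ q i} := by
  classical
  have hmem (i : ι) : (q i).minFac ∈ (∏ i, q i).primeFactors :=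
    Nat.mem_primeFactors.mpr ⟨Nat.minFac_prime (hq i).ne_one,
      (Nat.minFac_dvd _).trans (Finset.dvd_prod_of_mem q (Finset.mem_univ i)),
      Finset.prod_ne_zero_iff.mpr fun i _ => (hq i).ne_zero⟩
  rw [← Finset.card_univ, Finset.card_eq_sum_card_fiberwise fun i _ => hmem i]
  gcongr with p _ i _
  exact fun hi => hi ▸ Nat.minFac_dvd _

/-- If a finite abelian group `G` is a direct sum of `m` cyclic groups, then the number `k` of
summands in any primary decomposition of `G` (into nontrivial cyclic groups of prime-power
order) is at most `Ω_m(|G|)`. -/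
theorem kappa_le_truncatedOmega (G : Type*) [CommGroup G] [Fintype G] (m : ℕ)
    (d : Fin m → ℕ) (hG : Nonempty (G ≃* ((i : Fin m) → Multiplicative (ZMod (d i)))))
    (k : ℕ) (q : Fin k → ℕ) (hq : ∀ i, IsPrimePow (q i))
    (hdec : Nonempty (G ≃* ((i : Fin k) → Multiplicative (ZMod (q i))))) :
    k ≤ truncatedOmega m (Fintype.card G) := by
  obtain ⟨e⟩ := hG
  obtain ⟨f⟩ := hdec
  have (i : Fin k) : NeZero (q i) := ⟨(hq i).ne_zero⟩
  have hcard : Fintype.card G = ∏ i, q i := by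
    simp [← Nat.card_eq_fintype_card, Nat.card_congr f.toEquiv, Nat.card_pi,
      Nat.card_multiplicative_zmod]
  calc k = Fintype.card (Fin k) := (Fintype.card_fin k).symm
    _ ≤ ∑ p ∈ (∏ i, q i).primeFactors, #{i | p ∣ q i} :=
        card_le_sum_card_filter_dvd_of_isPrimePow hq
    _ ≤ truncatedOmega m (Fintype.card G) := by
        rw [truncatedOmega, hcard]
        gcongr with p hpG
        have hp := Nat.prime_of_mem_primeFactors hpG
        exact le_min (card_filter_dvd_le_factorization_prod (fun i => (hq i).ne_zero) hp)
          (card_filter_dvd_le_of_mulEquiv e f hp)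
end

section
/- Let G be a finite abelian group. Then the maximum cardinality of a non-redundant generating subset S of G equals κ(G), the number of summands in the primary decomposition of G. (In particular, any non-redundant subset S of G satisfies |S| ≤ κ(G).) -/
/-!
The images in `G` of the standard generators of the cyclic factors are non-redundant: the
projection onto the `i`-th factor kills all generators but the `i`-th one.

Conversely let `S` be non-redundant and `n = |G|`. For `x ∈ S` we have `x ∉ ⟨S \ {x}⟩`, so
some primary part `x ^ (n / p ^ v_p(n))` of `x` is not in `⟨S \ {x}⟩` either; assign `x` to
such a prime `p`. The `p`-parts `z` of the elements assigned to `p` are independent modulo `p`: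
in a relation `∏ z ^ d_z = 1` every `d_z` is divisible by `p`, for otherwise `z`, having
`p`-power order, would be a power of `z ^ d_z ∈ ⟨others⟩`. So they represent `p ^ |S_p|`
distinct classes of `N / N ^ p`, where `N` is the subgroup they generate, and
`|N / N ^ p| = |N[p]| ≤ |G[p]| = p ^ #{i | q i is a power of p}`. Summing over `p` gives
`|S| ≤ k`.
-/

/-- A finite subset `S` of a group is non-redundant if removing any element of `S`
generates a strictly smaller subgroup. -/
def NonRedundant {G : Type*} [CommGroup G] [DecidableEq G] (S : Finset G) : Prop :=
  ∀ x ∈ S, Subgroup.closure (↑(S.erase x) : Set G) < Subgroup.closure (S : Set G)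

open Finset

section NonRedundant

variable {G : Type*} [CommGroup G] [DecidableEq G]

theorem nonRedundant_iff {S : Finset G} :
    NonRedundant S ↔ ∀ x ∈ S, x ∉ Subgroup.closure (↑(S.erase x) : Set G) := by
  refine forall₂_congr fun x hx => ?_
  have hle : Subgroup.closure (↑(S.erase x) : Set G) ≤ Subgroup.closure S :=
    Subgroup.closure_mono (by simp)
  rw [lt_iff_le_not_ge, and_iff_right hle, Subgroup.closure_le, ← insert_erase hx, coe_insert,
    Set.insert_subset_iff, erase_insert_eq_erase, erase_eq_of_notMem (notMem_erase x S)]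
  simp [Subgroup.subset_closure]

end NonRedundant

section Separating

variable {G ι : Type*} [CommGroup G] {H : ι → Type*} [∀ i, Group (H i)]
  (f : ι → G) (χ : ∀ i, G →* H i) (h_self : ∀ i, χ i (f i) ≠ 1)
  (h_other : ∀ i j, j ≠ i → χ i (f j) = 1)
include h_self h_other

theorem injective_of_separating : Function.Injective f := by
  intro i j hij
  by_contra hne
  exact h_self j (hij ▸ h_other j i hne)

theorem nonRedundant_image_of_separating [Fintype ι] [DecidableEq G] :
    NonRedundant (univ.image f) := by
  refine nonRedundant_iff.2 fun x hx hmem => ?_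
  obtain ⟨i, -, rfl⟩ := mem_image.1 hx
  have hker : Subgroup.closure (↑((univ.image f).erase (f i)) : Set G) ≤ (χ i).ker := by
    rw [Subgroup.closure_le]
    intro y hy
    obtain ⟨hyi, hy⟩ := mem_erase.1 hy
    obtain ⟨j, -, rfl⟩ := mem_image.1 hy
    exact h_other i j (ne_of_apply_ne f hyi)
  exact h_self i (hker hmem)

end Separating

section PowMem

variable {G : Type*} [CommGroup G]

theorem orderOf_mk_dvd_iff_pow_mem (K : Subgroup G) (x : G) (m : ℕ) :
    orderOf (x : G ⧸ K) ∣ m ↔ x ^ m ∈ K := by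
  rw [orderOf_dvd_iff_pow_eq_one, ← QuotientGroup.mk_pow, QuotientGroup.eq_one_iff]

theorem orderOf_mk_dvd_iff_zpow_mem (K : Subgroup G) (x : G) (m : ℤ) :
    (orderOf (x : G ⧸ K) : ℤ) ∣ m ↔ x ^ m ∈ K := by
  rw [orderOf_dvd_iff_zpow_eq_one, ← QuotientGroup.mk_zpow, QuotientGroup.eq_one_iff]

theorem exists_pow_ordCompl_notMem {K : Subgroup G} {x : G} {n : ℕ} (hn : n ≠ 0)
    (hx : x ^ n = 1) (hxK : x ∉ K) : ∃ p ∈ n.primeFactors, x ^ ordCompl[p] n ∉ K := by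
  by_contra! h
  have hord : orderOf (x : G ⧸ K) ≠ 1 := by
    rwa [Ne, orderOf_eq_one_iff, QuotientGroup.eq_one_iff]
  obtain ⟨p, hp, hpdvd⟩ := Nat.exists_prime_and_dvd hord
  have hpn : p ∈ n.primeFactors := Nat.mem_primeFactors.2
    ⟨hp, hpdvd.trans ((orderOf_mk_dvd_iff_pow_mem K x n).2 (hx ▸ K.one_mem)), hn⟩
  exact Nat.not_dvd_ordCompl hp hn (hpdvd.trans ((orderOf_mk_dvd_iff_pow_mem K x _).2 (h p hpn)))

theorem mem_of_zpow_mem_of_not_dvd {K : Subgroup G} {x : G} {p b : ℕ} (hp : p.Prime)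
    (hx : x ^ p ^ b = 1) {d : ℤ} (hd : ¬ (p : ℤ) ∣ d) (h : x ^ d ∈ K) : x ∈ K := by
  obtain ⟨j, -, hj⟩ := (Nat.dvd_prime_pow hp).1
    ((orderOf_mk_dvd_iff_pow_mem K x _).2 (hx ▸ K.one_mem))
  have hdvd := (orderOf_mk_dvd_iff_zpow_mem K x d).2 h
  rcases j with _ | j
  · rwa [pow_zero, orderOf_eq_one_iff, QuotientGroup.eq_one_iff] at hj
  · exact (hd (dvd_trans (by rw [hj]; exact_mod_cast dvd_pow_self p j.succ_ne_zero) hdvd)).elim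

end PowMem

section Independent

variable {G ι : Type*} [CommGroup G] [Fintype ι] {z : ι → G}

theorem dvd_of_prod_zpow_eq_one [DecidableEq ι] {p b : ℕ} (hp : p.Prime)
    (hz : ∀ i, z i ^ p ^ b = 1) (hind : ∀ i, z i ∉ Subgroup.closure (z '' {i}ᶜ))
    {d : ι → ℤ} (h : ∏ i, z i ^ d i = 1) (i : ι) : (p : ℤ) ∣ d i := by
  by_contra hd
  refine hind i (mem_of_zpow_mem_of_not_dvd hp (hz i) hd ?_)
  rw [eq_inv_of_mul_eq_one_left ((mul_prod_erase univ _ (mem_univ i)).trans h)]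
  refine inv_mem (Subgroup.prod_mem _ fun j hj => zpow_mem (Subgroup.subset_closure ?_) _)
  exact ⟨j, by simpa using (mem_erase.1 hj).1, rfl⟩

theorem pow_card_le_index_range_powMonoidHom [Finite G] {p : ℕ}
    (hgen : Subgroup.closure (Set.range z) = ⊤)
    (hdvd : ∀ d : ι → ℤ, ∏ i, z i ^ d i = 1 → ∀ i, (p : ℤ) ∣ d i) :
    p ^ Fintype.card ι ≤ (powMonoidHom p : G →* G).range.index := by
  set R := (powMonoidHom p : G →* G).range
  let F : (ι → Fin p) → G ⧸ R := fun c => ((∏ i, z i ^ (c i : ℕ) : G) : G ⧸ R)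
  have hF : Function.Injective F := by
    intro c c' h
    obtain ⟨y, hy⟩ := QuotientGroup.eq.1 h
    obtain ⟨e, rfl⟩ := Subgroup.exists_of_mem_closure_range z y (hgen ▸ Subgroup.mem_top y)
    rw [powMonoidHom_apply] at hy
    have hprod : ∏ i, z i ^ ((c' i : ℤ) - c i - p * e i) = 1 := by
      simp only [zpow_sub, zpow_mul', zpow_natCast, prod_mul_distrib, prod_inv_distrib, prod_pow,
        hy, mul_inv_rev, inv_inv]
      rw [mul_comm (∏ i, _)⁻¹, ← mul_assoc, inv_mul_cancel_right, mul_inv_cancel]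
    funext i
    refine Fin.ext (Nat.ModEq.eq_of_lt_of_lt (Nat.modEq_iff_dvd.2 ?_) (c i).2 (c' i).2)
    simpa using dvd_add (hdvd _ hprod i) (dvd_mul_right (p : ℤ) (e i))
  calc p ^ Fintype.card ι = Nat.card (ι → Fin p) := by simp [Nat.card_fun]
    _ ≤ R.index := Nat.card_le_card_of_injective F hF

theorem pow_card_le_card_ker_powMonoidHom [Finite G] [DecidableEq ι] {p b : ℕ} (hp : p.Prime)
    (hz : ∀ i, z i ^ p ^ b = 1) (hind : ∀ i, z i ∉ Subgroup.closure (z '' {i}ᶜ)) :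
    p ^ Fintype.card ι ≤ Nat.card (powMonoidHom p : G →* G).ker := by
  set N := Subgroup.closure (Set.range z)
  let z' : ι → N := fun i => ⟨z i, Subgroup.subset_closure (Set.mem_range_self i)⟩
  have hgen : Subgroup.closure (Set.range z') = ⊤ := by
    have hrange : Set.range z' = Subtype.val ⁻¹' Set.range z := by
      ext x
      exact ⟨fun ⟨i, hi⟩ => ⟨i, congrArg Subtype.val hi⟩,
        fun ⟨i, hi⟩ => ⟨i, Subtype.ext hi⟩⟩
    rw [hrange, Subgroup.closure_closure_coe_preimage]
  have hdvd (d : ι → ℤ) (h : ∏ i, z' i ^ d i = 1) : ∀ i, (p : ℤ) ∣ d i :=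
    dvd_of_prod_zpow_eq_one hp hz hind (by simpa [z'] using congrArg Subtype.val h)
  have hker : Function.Injective fun x : (powMonoidHom p : N →* N).ker =>
      (⟨x.1.1, by simpa using congrArg Subtype.val x.2⟩ : (powMonoidHom p : G →* G).ker) := by
    intro x y h
    exact Subtype.ext (Subtype.ext (congrArg (fun w => w.1) h))
  calc p ^ Fintype.card ι ≤ (powMonoidHom p : N →* N).range.index :=
        pow_card_le_index_range_powMonoidHom hgen hdvd
    _ = Nat.card (powMonoidHom p : N →* N).ker := Subgroup.index_range
    _ ≤ Nat.card (powMonoidHom p : G →* G).ker := Nat.card_le_card_of_injective _ hker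

end Independent

section UpperBound

variable {G : Type*} [CommGroup G] [Finite G] [DecidableEq G]

theorem pow_card_le_card_ker_powMonoidHom_of_pow_notMem {T : Finset G} {e p b : ℕ}
    (hp : p.Prime) (he : ∀ x : G, (x ^ e) ^ p ^ b = 1)
    (hT : ∀ x ∈ T, x ^ e ∉ Subgroup.closure (↑(T.erase x) : Set G)) :
    p ^ T.card ≤ Nat.card (powMonoidHom p : G →* G).ker := by
  rw [← Fintype.card_coe]
  refine pow_card_le_card_ker_powMonoidHom (z := fun x : T => x.1 ^ e) hp (fun x => he x)
    fun x hx => hT x x.2 ((Subgroup.closure_le _).2 ?_ hx)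
  rintro _ ⟨y, hy, rfl⟩
  exact pow_mem (Subgroup.subset_closure (mem_erase.2 ⟨fun h => hy (Subtype.ext h), y.2⟩)) e

theorem NonRedundant.card_le_sum_primeFactors {S : Finset G} (hS : NonRedundant S)
    (ρ : ℕ → ℕ) (hρ : ∀ p ∈ (Nat.card G).primeFactors,
      Nat.card (powMonoidHom p : G →* G).ker ≤ p ^ ρ p) :
    S.card ≤ ∑ p ∈ (Nat.card G).primeFactors, ρ p := by
  choose! P hP hPS using fun x hx => exists_pow_ordCompl_notMem Nat.card_pos.ne'
    (pow_card_eq_one' (G := G)) (nonRedundant_iff.1 hS x hx)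
  rw [card_eq_sum_card_fiberwise hP]
  refine sum_le_sum fun p hp => ?_
  have hpp := Nat.prime_of_mem_primeFactors hp
  refine (Nat.pow_le_pow_iff_right hpp.one_lt).1 (le_trans ?_ (hρ p hp))
  refine pow_card_le_card_ker_powMonoidHom_of_pow_notMem hpp (e := ordCompl[p] (Nat.card G))
    (b := (Nat.card G).factorization p) (fun x => ?_) fun x hx hmem => ?_
  · rw [← pow_mul, mul_comm, Nat.ordProj_mul_ordCompl_eq_self, pow_card_eq_one']
  · obtain ⟨hxS, rfl⟩ := mem_filter.1 hx
    exact hPS x hxS (Subgroup.closure_mono (erase_subset_erase x (filter_subset _ S)) hmem)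

end UpperBound

section Torsion

theorem MulEquiv.card_ker_powMonoidHom {G H : Type*} [CommGroup G] [CommGroup H] (E : G ≃* H)
    (p : ℕ) :
    Nat.card (powMonoidHom p : G →* G).ker = Nat.card (powMonoidHom p : H →* H).ker :=
  Nat.card_congr (E.toEquiv.subtypeEquiv fun x => by simp [← map_pow])

theorem card_ker_powMonoidHom_pi {ι : Type*} [Fintype ι] {M : ι → Type*}
    [∀ i, CommGroup (M i)] (p : ℕ) :
    Nat.card (powMonoidHom p : (∀ i, M i) →* ∀ i, M i).ker =
      ∏ i, Nat.card (powMonoidHom p : M i →* M i).ker := by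
  rw [← Nat.card_pi]
  exact Nat.card_congr ((Equiv.subtypeEquivRight fun y => by
    simp only [MonoidHom.mem_ker, powMonoidHom_apply, funext_iff, Pi.pow_apply, Pi.one_apply]).trans
    (Equiv.subtypePiEquivPi (p := fun i y => y ∈ (powMonoidHom p : M i →* M i).ker)))

theorem card_ker_powMonoidHom_zmod_primePow_le {r b p : ℕ} (hr : r.Prime) (hp : p.Prime) :
    Nat.card (powMonoidHom p : Multiplicative (ZMod (r ^ b)) →* _).ker ≤
      p ^ if r = p then 1 else 0 := by
  have : NeZero (r ^ b) := ⟨pow_ne_zero b hr.ne_zero⟩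
  rw [IsCyclic.card_powMonoidHom_ker, Nat.card_congr Multiplicative.toAdd, Nat.card_zmod]
  split_ifs with h
  · exact (Nat.gcd_le_right (r ^ b) hp.pos).trans (pow_one p).ge
  · rw [((Nat.coprime_primes hr hp).2 h).pow_left b, pow_zero]

theorem card_ker_powMonoidHom_pi_zmod_le {ι : Type*} [Fintype ι] {r b : ι → ℕ}
    (hr : ∀ i, (r i).Prime) {p : ℕ} (hp : p.Prime) :
    Nat.card (powMonoidHom p : (∀ i, Multiplicative (ZMod (r i ^ b i))) →* _).ker ≤
      p ^ #{i | r i = p} := by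
  rw [card_ker_powMonoidHom_pi]
  calc ∏ i, Nat.card (powMonoidHom p : Multiplicative (ZMod (r i ^ b i)) →* _).ker
      ≤ ∏ i, p ^ if r i = p then 1 else 0 :=
        prod_le_prod' fun i _ => card_ker_powMonoidHom_zmod_primePow_le (hr i) hp
    _ = p ^ #{i | r i = p} := by rw [prod_pow_eq_pow_sum, sum_boole, Nat.cast_id]

end Torsion

/-- The maximum cardinality of a non-redundant subset of a finite abelian group `G` equals
`κ(G)`, the number of summands in a primary decomposition of `G` (here given as a
decomposition into `k` nontrivial cyclic groups of prime-power order). -/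
theorem max_card_nonredundant_eq_kappa (G : Type*) [CommGroup G] [Fintype G] [DecidableEq G]
    (k : ℕ) (q : Fin k → ℕ) (hq : ∀ i, IsPrimePow (q i))
    (hdec : Nonempty (G ≃* ((i : Fin k) → Multiplicative (ZMod (q i))))) :
    IsGreatest {n : ℕ | ∃ S : Finset G, NonRedundant S ∧ S.card = n} k := by
  obtain ⟨E⟩ := hdec
  choose r b hr hb hrb using fun i => (isPrimePow_nat_iff _).1 (hq i)
  obtain rfl : q = fun i => r i ^ b i := funext fun i => (hrb i).symm
  have (i : Fin k) : Fact (1 < r i ^ b i) := ⟨Nat.one_lt_pow (hb i).ne' (hr i).one_lt⟩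
  let f (i : Fin k) : G := E.symm (Pi.mulSingle i (Multiplicative.ofAdd 1))
  let χ (i : Fin k) : G →* Multiplicative (ZMod (r i ^ b i)) :=
    (Pi.evalMonoidHom _ i).comp E.toMonoidHom
  have h_self (i : Fin k) : χ i (f i) ≠ 1 := by simp [χ, f]
  have h_other (i j : Fin k) (h : j ≠ i) : χ i (f j) = 1 := by
    simpa [χ, f] using Pi.mulSingle_eq_of_ne h.symm _
  refine ⟨⟨univ.image f, nonRedundant_image_of_separating f χ h_self h_other, ?_⟩, ?_⟩
  · rw [card_image_of_injective _ (injective_of_separating f χ h_self h_other), card_univ,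
      Fintype.card_fin]
  rintro _ ⟨S, hS, rfl⟩
  have hcard : Nat.card G = ∏ i, r i ^ b i := by
    rw [Nat.card_congr E.toEquiv, Nat.card_pi]
    exact prod_congr rfl fun i _ => (Nat.card_congr Multiplicative.toAdd).trans (Nat.card_zmod _)
  have hr_mem (i : Fin k) : r i ∈ (Nat.card G).primeFactors := Nat.mem_primeFactors.2
    ⟨hr i, hcard ▸ (dvd_pow_self _ (hb i).ne').trans (dvd_prod_of_mem _ (mem_univ i)),
      Nat.card_pos.ne'⟩
  calc S.card ≤ ∑ p ∈ (Nat.card G).primeFactors, #{i | r i = p} :=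
        hS.card_le_sum_primeFactors _ fun p hp => (E.card_ker_powMonoidHom p).trans_le
          (card_ker_powMonoidHom_pi_zmod_le hr (Nat.prime_of_mem_primeFactors hp))
    _ = k := by
        rw [← card_eq_sum_card_fiberwise fun i _ => hr_mem i, card_univ, Fintype.card_fin]
end

section
/- Let A ∈ ℤ^{m×n} be a matrix whose columns positively span ℝ^m (i.e., every vector of ℝ^m is a non-negative real combination of the columns). Then the semigroup Sg(A) = {Ax : x ∈ ℤ^n_{≥0}} equals the lattice ℒ(A) = {Ax : x ∈ ℤ^n}. -/
/-!
Applying positive spanning to `-A 𝟙` gives a real vector `d ≥ 1` with `A d = 0`. Each integer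
vector `⌊N d⌋`, `N ∈ ℕ`, lies within distance one of the kernel vector `N d`, so their
images under `A` take only finitely many values; two of them, `N < M`, collide, and
`y = ⌊M d⌋ - ⌊N d⌋` is an integer kernel vector with `y ≥ 1`. Adding a large
multiple of `y` to any `x` makes it non-negative without changing `A x`.
-/

open Matrix

variable {m n : Type*} [Fintype n]

theorem exists_one_le_mulVec_eq_zero {R : Type*} [CommRing R] [PartialOrder R]
    [IsOrderedRing R] (A : Matrix m n R) (hspan : ∀ v, ∃ c, 0 ≤ c ∧ A *ᵥ c = v) :
    ∃ d, 1 ≤ d ∧ A *ᵥ d = 0 := by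
  obtain ⟨c, hc, hAc⟩ := hspan (-(A *ᵥ 1))
  refine ⟨c + 1, le_add_of_nonneg_left hc, ?_⟩
  rw [mulVec_add, hAc, neg_add_cancel]

theorem abs_mulVec_le_of_abs_sub_le_one (A : Matrix m n ℤ) {d : n → ℝ}
    (hd : A.map ((↑) : ℤ → ℝ) *ᵥ d = 0) {x : n → ℤ} (hx : ∀ j, |(x j : ℝ) - d j| ≤ 1)
    (i : m) : |(A *ᵥ x) i| ≤ ∑ j, |A i j| := by
  have hcast : ((A *ᵥ x) i : ℝ) = ∑ j, (A i j : ℝ) * ((x j : ℝ) - d j) := by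
    have hAd : ∑ j, (A i j : ℝ) * d j = 0 := by
      simpa [mulVec, dotProduct] using congrFun hd i
    simp only [mul_sub, Finset.sum_sub_distrib, hAd, sub_zero]
    push_cast [mulVec, dotProduct]
    rfl
  have hreal : |((A *ᵥ x) i : ℝ)| ≤ ∑ j, |(A i j : ℝ)| :=
    calc |((A *ᵥ x) i : ℝ)|
        ≤ ∑ j, |(A i j : ℝ)| * |(x j : ℝ) - d j| := by
          rw [hcast]
          simpa only [abs_mul] using
            Finset.abs_sum_le_sum_abs (fun j => (A i j : ℝ) * ((x j : ℝ) - d j)) Finset.univ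
      _ ≤ ∑ j, |(A i j : ℝ)| := Finset.sum_le_sum fun j _ =>
          mul_le_of_le_one_right (abs_nonneg _) (hx j)
  exact_mod_cast hreal

theorem exists_int_one_le_mulVec_eq_zero [Finite m] (A : Matrix m n ℤ) {d : n → ℝ}
    (hd1 : 1 ≤ d) (hd : A.map ((↑) : ℤ → ℝ) *ᵥ d = 0) :
    ∃ y : n → ℤ, 1 ≤ y ∧ A *ᵥ y = 0 := by
  set approx : ℕ → n → ℤ := fun N j => ⌊(N : ℝ) * d j⌋
  have happrox (N : ℕ) (j : n) : |(approx N j : ℝ) - N * d j| ≤ 1 := by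
    rw [abs_sub_comm, Int.self_sub_floor, abs_of_nonneg (Int.fract_nonneg _)]
    exact (Int.fract_lt_one _).le
  have hNd (N : ℕ) : A.map ((↑) : ℤ → ℝ) *ᵥ (fun j => N * d j) = 0 := by
    rw [show (fun j => (N : ℝ) * d j) = (N : ℝ) • d from rfl, mulVec_smul, hd, smul_zero]
  have hbox (N : ℕ) :
      A *ᵥ approx N ∈ Set.univ.pi fun i => Set.Icc (-∑ j, |A i j|) (∑ j, |A i j|) :=
    fun i _ => abs_le.mp <| abs_mulVec_le_of_abs_sub_le_one A (hNd N) (happrox N) i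
  obtain ⟨N, M, hNM, hAeq⟩ :=
    Set.Finite.exists_lt_map_eq_of_forall_mem hbox (Set.Finite.pi fun i => Set.finite_Icc _ _)
  refine ⟨approx M - approx N, fun j => ?_, by rw [mulVec_sub, hAeq, sub_self]⟩
  have hNM' : (N : ℝ) + 1 ≤ M := by exact_mod_cast hNM
  have hdj : 1 ≤ d j := hd1 j
  have hstep : (N : ℝ) * d j + 1 ≤ M * d j :=
    calc (N : ℝ) * d j + 1 ≤ (N + 1) * d j := by linarith
      _ ≤ M * d j := mul_le_mul_of_nonneg_right hNM' (by linarith)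
  have := Int.floor_mono hstep
  rw [Int.floor_add_one] at this
  simp only [Pi.sub_apply, Pi.one_apply, approx]
  omega

theorem exists_nonneg_mulVec_eq {R : Type*} [CommRing R] [LinearOrder R] [IsStrictOrderedRing R]
    (A : Matrix m n R) {y : n → R} (hy1 : 1 ≤ y) (hy : A *ᵥ y = 0) (x : n → R) :
    ∃ x', 0 ≤ x' ∧ A *ᵥ x' = A *ᵥ x := by
  set K := ∑ j, |x j|
  refine ⟨x + K • y, fun j => ?_, by rw [mulVec_add, mulVec_smul, hy, smul_zero, add_zero]⟩
  have hK : |x j| ≤ K := Finset.single_le_sum (fun j _ => abs_nonneg (x j)) (Finset.mem_univ j)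
  have hKy : K ≤ K * y j := le_mul_of_one_le_right ((abs_nonneg _).trans hK) (hy1 j)
  simp only [Pi.add_apply, Pi.smul_apply, smul_eq_mul, Pi.zero_apply]
  linarith [neg_abs_le (x j)]

/-- If the columns of the integer matrix `A` positively span `ℝ^m`, then the semigroup of
non-negative integer combinations of the columns equals the lattice of all integer
combinations of the columns. -/
theorem semigroup_eq_lattice_of_positively_spanning {m n : ℕ}
    (A : Matrix (Fin m) (Fin n) ℤ)
    (hspan : ∀ v : Fin m → ℝ, ∃ c : Fin n → ℝ, (∀ j, 0 ≤ c j) ∧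
      (∀ i, v i = ∑ j, c j * (A i j : ℝ))) :
    {b : Fin m → ℤ | ∃ x : Fin n → ℤ, (∀ j, 0 ≤ x j) ∧ A.mulVec x = b} =
      {b : Fin m → ℤ | ∃ x : Fin n → ℤ, A.mulVec x = b} := by
  have hspan' : ∀ v, ∃ c, 0 ≤ c ∧ A.map ((↑) : ℤ → ℝ) *ᵥ c = v := fun v => by
    obtain ⟨c, hc, hv⟩ := hspan v
    refine ⟨c, hc, funext fun i => ?_⟩
    simp only [hv i, mulVec, dotProduct, map_apply, mul_comm]
  obtain ⟨d, hd1, hd⟩ := exists_one_le_mulVec_eq_zero _ hspan'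
  obtain ⟨y, hy1, hy⟩ := exists_int_one_le_mulVec_eq_zero A hd1 hd
  ext b
  constructor
  · exact fun ⟨x, _, hx⟩ => ⟨x, hx⟩
  · rintro ⟨x, rfl⟩
    exact exists_nonneg_mulVec_eq A hy1 hy x
end

section
/- Let a = (a₁,…,a_n) ∈ (ℤ \ {0})^n be a vector containing both positive and negative components, and b ∈ ℤ. If the equation a·x = b has a solution x ∈ ℤ^n_{≥0}, then it has such a solution with ‖x‖₀ ≤ 2 + min_{i ∈ [n]} ω(|a_i| / gcd(a)), where ω denotes the number of distinct prime factors. -/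
/-!
Let `d = gcd a`, so `d ∣ b`, and pick `i₀` minimising `ω(|a i₀| / d)`. For every prime
`p ∣ |a i₀| / d` some `a j` is not divisible by `p * d`; these `j` together with `i₀` form a set
`T` of at most `1 + ω(|a i₀| / d)` indices on which `a` still has gcd `d`. Add to `T` one index
`w` with `a w` of sign opposite to `a i₀`. Bézout gives an integer solution supported on
`T ∪ {w}`, and since this set carries coefficients of both signs, the solution can be shifted
by vectors in the kernel of `x ↦ a ⬝ᵥ x`, supported on the same set, until it is non-negative.
-/

open Finset

theorem Int.natCast_finsetGcd_natAbs {ι : Type*} (s : Finset ι) (f : ι → ℤ) :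
    ((s.gcd fun i => (f i).natAbs : ℕ) : ℤ) = s.gcd f := by
  classical
  induction s using Finset.induction with
  | empty => simp
  | insert i s hi ih => rw [gcd_insert, gcd_insert, ← ih, ← Int.coe_gcd]; rfl

theorem exists_dotProduct_eq_of_gcd_dvd {ι : Type*} [Fintype ι] [DecidableEq ι]
    (a : ι → ℤ) {s : Finset ι} {b : ℤ} (hb : s.gcd a ∣ b) :
    ∃ z : ι → ℤ, (∀ j ∉ s, z j = 0) ∧ a ⬝ᵥ z = b := by
  obtain ⟨c, rfl⟩ := hb
  obtain ⟨g, hg⟩ := s.gcd_eq_sum_mul a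
  refine ⟨fun j => if j ∈ s then g j * c else 0, fun j hj => if_neg hj, ?_⟩
  simp only [dotProduct, mul_ite, mul_zero, sum_ite_mem, univ_inter, hg, sum_mul, mul_assoc]

theorem exists_nonneg_dotProduct_eq_of_pos_of_neg {ι : Type*} [Fintype ι] [DecidableEq ι]
    {a z : ι → ℤ} {s : Finset ι} (hz : ∀ j ∉ s, z j = 0) {p q : ι} (hp : p ∈ s) (hq : q ∈ s)
    (hap : 0 < a p) (haq : a q < 0) :
    ∃ x : ι → ℤ, 0 ≤ x ∧ a ⬝ᵥ x = a ⬝ᵥ z ∧ ∀ j ∉ s, x j = 0 := by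
  -- `t ≥ z⁻` with `a ⬝ᵥ t ≥ 0`; then adding `(-a q) • t + (a ⬝ᵥ t) • e_q` clears the negative
  -- entries of `z` without changing `a ⬝ᵥ z`.
  set t : ι → ℤ := z⁻ + Pi.single p |a ⬝ᵥ z⁻|
  have ht : 0 ≤ a ⬝ᵥ t := by
    rw [dotProduct_add, dotProduct_single]
    nlinarith [neg_abs_le (a ⬝ᵥ z⁻), abs_nonneg (a ⬝ᵥ z⁻)]
  refine ⟨z + (-a q) • t + Pi.single q (a ⬝ᵥ t), fun j => ?_, ?_, fun j hj => ?_⟩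
  · have hsingle_p : 0 ≤ (Pi.single p |a ⬝ᵥ z⁻| : ι → ℤ) j := by by_cases h : j = p <;> simp [h]
    have ht_ge : z⁻ j ≤ t j := le_add_of_nonneg_right hsingle_p
    have hneg_ge : -z j ≤ z⁻ j := le_max_left _ _
    have hneg_nonneg : 0 ≤ z⁻ j := le_max_right _ _
    have hscale : t j ≤ -a q * t j := le_mul_of_one_le_left (by linarith) (by linarith)
    have hsingle_q : 0 ≤ (Pi.single q (a ⬝ᵥ t) : ι → ℤ) j := by
      by_cases h : j = q <;> simp [h, ht]
    simp only [Pi.zero_apply, Pi.add_apply, Pi.smul_apply, smul_eq_mul]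
    linarith
  · rw [dotProduct_add, dotProduct_add, dotProduct_smul, dotProduct_single, smul_eq_mul]
    ring
  · have hjp : j ≠ p := fun h => hj (h ▸ hp)
    have hjq : j ≠ q := fun h => hj (h ▸ hq)
    simp [t, hz j hj, hjp, hjq]

theorem Finset.exists_subset_gcd_eq_card_le {ι : Type*} [DecidableEq ι] (f : ι → ℕ)
    {s : Finset ι} {i : ι} (hi : i ∈ s) (hfi : f i ≠ 0) :
    ∃ t ⊆ s, i ∈ t ∧ #t ≤ 1 + (f i / s.gcd f).primeFactors.card ∧ t.gcd f = s.gcd f := by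
  set d := s.gcd f
  set g := f i / d
  have hdg : d * g = f i := Nat.mul_div_cancel' (gcd_dvd hi)
  have hd : 0 < d := Nat.pos_of_ne_zero (left_ne_zero_of_mul (hdg ▸ hfi))
  have hg : g ≠ 0 := right_ne_zero_of_mul (hdg ▸ hfi)
  have hwit : ∀ p ∈ g.primeFactors, ∃ j ∈ s, ¬ p * d ∣ f j := by
    intro p hp
    by_contra! h
    have := Nat.le_of_dvd hd (dvd_gcd h)
    nlinarith [(Nat.prime_of_mem_primeFactors hp).two_le]
  have : Nonempty ι := ⟨i⟩
  choose! j hjs hj using hwit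
  set t := insert i (g.primeFactors.image j)
  have hts : t ⊆ s := insert_subset hi (image_subset_iff.2 hjs)
  refine ⟨t, hts, mem_insert_self _ _, ?_, ?_⟩
  · have h₁ : #t ≤ #(g.primeFactors.image j) + 1 := card_insert_le _ _
    have h₂ : #(g.primeFactors.image j) ≤ #g.primeFactors := card_image_le
    omega
  · obtain ⟨e, he⟩ : d ∣ t.gcd f := gcd_mono hts
    have heg : e ∣ g := by
      have : t.gcd f ∣ f i := gcd_dvd (mem_insert_self _ _)
      rw [he, ← hdg] at this
      exact Nat.dvd_of_mul_dvd_mul_left hd this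
    have he1 : e = 1 := by
      refine Nat.eq_one_iff_not_exists_prime_dvd.2 fun p hp hpe => ?_
      have hpg : p ∈ g.primeFactors := Nat.mem_primeFactors.2 ⟨hp, hpe.trans heg, hg⟩
      have hpd : p * d ∣ t.gcd f := he ▸ mul_comm d p ▸ mul_dvd_mul_left d hpe
      exact hj p hpg (hpd.trans (gcd_dvd (mem_insert_of_mem (mem_image_of_mem j hpg))))
    rw [he, he1, mul_one]

/-- Mixed-sign knapsack: if `a ∈ (ℤ \ {0})^n` has both positive and negative components and
`a · x = b` has a non-negative integer solution, then it has one with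
`‖x‖₀ ≤ 2 + min_i ω(|a_i| / gcd a)`, where `ω` counts distinct prime factors. -/
theorem sparse_solution_mixed_sign_knapsack {n : ℕ} (a : Fin n → ℤ) (b : ℤ)
    (ha : ∀ i, a i ≠ 0) (hpos : ∃ i, 0 < a i) (hneg : ∃ i, a i < 0)
    (hfeas : ∃ x : Fin n → ℤ, (∀ i, 0 ≤ x i) ∧ ∑ i, a i * x i = b) :
    ∃ x : Fin n → ℤ, (∀ i, 0 ≤ x i) ∧ ∑ i, a i * x i = b ∧
      ∀ i : Fin n,
        (Finset.univ.filter fun j => x j ≠ 0).card ≤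
          2 + ((a i).natAbs / Finset.univ.gcd fun j => (a j).natAbs).primeFactors.card := by
  classical
  obtain ⟨x₀, -, rfl⟩ := hfeas
  obtain ⟨k, hk⟩ := hpos
  obtain ⟨m, hm⟩ := hneg
  set f : Fin n → ℕ := fun j => (a j).natAbs
  obtain ⟨i₀, -, hi₀⟩ := exists_min_image univ (fun i => (f i / univ.gcd f).primeFactors.card)
    ⟨k, mem_univ k⟩
  obtain ⟨t, -, hi₀t, ht, htgcd⟩ :=
    exists_subset_gcd_eq_card_le f (mem_univ i₀) (Int.natAbs_ne_zero.2 (ha i₀))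
  obtain ⟨w, p, q, hp, hq, hap, haq⟩ :
      ∃ w p q, p ∈ insert w t ∧ q ∈ insert w t ∧ 0 < a p ∧ a q < 0 := by
    rcases (ha i₀).lt_or_gt with h | h
    · exact ⟨k, k, i₀, mem_insert_self _ _, mem_insert_of_mem hi₀t, hk, h⟩
    · exact ⟨m, i₀, m, mem_insert_of_mem hi₀t, mem_insert_self _ _, h, hm⟩
  have hgcd : (insert w t).gcd a = univ.gcd a := by
    rw [← Int.natCast_finsetGcd_natAbs, ← Int.natCast_finsetGcd_natAbs, gcd_insert, htgcd]
    exact congrArg _ (Nat.gcd_eq_right (Finset.gcd_dvd (mem_univ w)))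
  have hdvd : (insert w t).gcd a ∣ a ⬝ᵥ x₀ :=
    hgcd ▸ dvd_sum fun i _ => (Finset.gcd_dvd (mem_univ i)).mul_right _
  obtain ⟨z, hz, hza⟩ := exists_dotProduct_eq_of_gcd_dvd a hdvd
  obtain ⟨x, hx, hxa, hxs⟩ := exists_nonneg_dotProduct_eq_of_pos_of_neg hz hp hq hap haq
  refine ⟨x, hx, hxa.trans hza, fun i => ?_⟩
  calc #(univ.filter fun j => x j ≠ 0) ≤ #(insert w t) :=
        card_le_card fun j hj => by_contra fun hjt => (mem_filter.1 hj).2 (hxs j hjt)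
    _ ≤ 2 + (f i₀ / univ.gcd f).primeFactors.card := by
        have := card_insert_le w t
        omega
    _ ≤ _ := Nat.add_le_add_left (hi₀ i (mem_univ i)) 2
end

section
/- Let a₁,…,a_t ∈ ℤ_{>0} with t > 1 + log₂(a₁). Then there exists a non-zero integer vector (y₁,…,y_t) with y₁ ≥ 0 and y₂,…,y_t ∈ {-1,0,1} satisfying y₁a₁ + y₂a₂ + ⋯ + y_t a_t = 0. -/
/-!
Put `n = a₁`. Since `t > 1 + log₂ n`, the `t - 1` indices `i ≥ 2` have `2 ^ (t - 1) > n` subsets,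
so two distinct subsets `A`, `B` have sums congruent modulo `n`; order them so that
`∑_A a ≤ ∑_B a` and write `∑_B a - ∑_A a = m n` with `m ≥ 0`. Then `y₁ = m` together with
`y_i = [i ∈ A] - [i ∈ B]` for `i ≥ 2` is the required relation.
-/

open Finset

theorem Real.lt_two_pow_of_one_add_logb_lt {x : ℝ} {n : ℕ} (hx : 0 < x)
    (h : 1 + Real.logb 2 x < n) : x < 2 ^ (n - 1) := by
  have hlog : Real.logb 2 x < (n : ℝ) - 1 := by linarith
  rw [Real.logb_lt_iff_lt_rpow one_lt_two hx] at hlog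
  calc x < (2 : ℝ) ^ ((n : ℝ) - 1) := hlog
    _ ≤ (2 : ℝ) ^ ((n - 1 : ℕ) : ℝ) :=
        Real.rpow_le_rpow_of_exponent_le one_le_two (by rcases n with _ | n <;> simp)
    _ = 2 ^ (n - 1) := Real.rpow_natCast 2 (n - 1)

theorem Finset.exists_ne_subsets_sum_modEq {ι : Type*} (s : Finset ι) (f : ι → ℤ) {n : ℤ}
    (hn : 0 < n) (hs : n < 2 ^ #s) :
    ∃ A ⊆ s, ∃ B ⊆ s, A ≠ B ∧ ∑ i ∈ A, f i ≡ ∑ i ∈ B, f i [ZMOD n] := by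
  have hcard : #(Ico 0 n) < #s.powerset := by
    rw [Int.card_Ico, card_powerset, sub_zero, ← Int.ofNat_lt, Int.toNat_of_nonneg hn.le]
    exact_mod_cast hs
  obtain ⟨A, hA, B, hB, hAB, heq⟩ := exists_ne_map_eq_of_card_lt_of_maps_to hcard
    (f := fun A => (∑ i ∈ A, f i) % n)
    (fun A _ => mem_Ico.2 ⟨Int.emod_nonneg _ hn.ne', Int.emod_lt_of_pos _ hn⟩)
  exact ⟨A, mem_powerset.1 hA, B, mem_powerset.1 hB, hAB, heq⟩

section SignedIndicator

variable {ι : Type*} [DecidableEq ι]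

def Finset.signedIndicator (A B : Finset ι) (i : ι) : ℤ :=
  (if i ∈ A then 1 else 0) - (if i ∈ B then 1 else 0)

theorem Finset.signedIndicator_mem (A B : Finset ι) (i : ι) :
    signedIndicator A B i ∈ ({-1, 0, 1} : Set ℤ) := by
  unfold signedIndicator
  split_ifs <;> simp

theorem Finset.exists_mem_union_signedIndicator_ne_zero {A B : Finset ι} (h : A ≠ B) :
    ∃ i ∈ A ∪ B, signedIndicator A B i ≠ 0 := by
  obtain ⟨i, hi⟩ := not_forall.1 (mt Finset.ext h)
  refine ⟨i, ?_, ?_⟩ <;> simp only [mem_union, signedIndicator] <;>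
    by_cases hA : i ∈ A <;> simp_all

theorem Finset.sum_signedIndicator_mul [Fintype ι] (A B : Finset ι) (f : ι → ℤ) :
    ∑ i, signedIndicator A B i * f i = ∑ i ∈ A, f i - ∑ i ∈ B, f i := by
  simp only [signedIndicator, sub_mul, ite_mul, one_mul, zero_mul, sum_sub_distrib,
    sum_ite_mem, univ_inter]

theorem exists_relation_of_sum_modEq [Fintype ι] (f : ι → ℤ) {z : ι} (hz : 0 < f z)
    {A B : Finset ι} (hA : z ∉ A) (hB : z ∉ B) (hAB : A ≠ B)
    (h : ∑ i ∈ A, f i ≡ ∑ i ∈ B, f i [ZMOD f z]) :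
    ∃ y : ι → ℤ, y ≠ 0 ∧ 0 ≤ y z ∧ (∀ i, i ≠ z → y i ∈ ({-1, 0, 1} : Set ℤ)) ∧
      ∑ i, y i * f i = 0 := by
  wlog hle : ∑ i ∈ A, f i ≤ ∑ i ∈ B, f i generalizing A B
  · exact this hB hA hAB.symm h.symm (le_of_not_ge hle)
  obtain ⟨m, hm⟩ := h.dvd
  have hm0 : 0 ≤ m := nonneg_of_mul_nonneg_right (hm ▸ sub_nonneg.2 hle) hz
  refine ⟨signedIndicator A B + Pi.single z m, ?_, ?_, ?_, ?_⟩
  · obtain ⟨i, hi, hne⟩ := exists_mem_union_signedIndicator_ne_zero hAB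
    have hiz : i ≠ z := by rintro rfl; simp_all
    exact fun h0 => hne (by simpa [hiz] using congrFun h0 i)
  · simpa [signedIndicator, hA, hB] using hm0
  · intro i hi
    simpa [hi] using signedIndicator_mem A B i
  · simp only [Pi.add_apply, add_mul, sum_add_distrib, sum_signedIndicator_mul, Pi.single_apply,
      ite_mul, zero_mul, sum_ite_eq', mem_univ, if_true]
    linarith

end SignedIndicator

theorem exists_relation_of_lt_two_pow {ι : Type*} [Fintype ι] [DecidableEq ι] (f : ι → ℤ)
    {z : ι} (hz : 0 < f z) (hlt : f z < 2 ^ (Fintype.card ι - 1)) :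
    ∃ y : ι → ℤ, y ≠ 0 ∧ 0 ≤ y z ∧ (∀ i, i ≠ z → y i ∈ ({-1, 0, 1} : Set ℤ)) ∧
      ∑ i, y i * f i = 0 := by
  obtain ⟨A, hA, B, hB, hAB, h⟩ := exists_ne_subsets_sum_modEq (univ.erase z) f hz
    (by rwa [card_erase_of_mem (mem_univ z), card_univ])
  exact exists_relation_of_sum_modEq f hz (fun hzA => notMem_erase z _ (hA hzA))
    (fun hzB => notMem_erase z _ (hB hzB)) hAB h

/-- If `a₁, …, a_t` are positive integers with `t > 1 + log₂ a₁`, then there is a non-zero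
integer vector `y` with `y₁ ≥ 0`, `y_i ∈ {-1,0,1}` for `i ≥ 2`, and `∑ y_i a_i = 0`. -/
theorem exists_small_integer_relation {t : ℕ} (ht : 0 < t) (a : Fin t → ℤ)
    (ha : ∀ i, 0 < a i)
    (htlog : (1 : ℝ) + Real.logb 2 (a ⟨0, ht⟩) < t) :
    ∃ y : Fin t → ℤ, y ≠ 0 ∧ 0 ≤ y ⟨0, ht⟩ ∧
      (∀ i : Fin t, i ≠ ⟨0, ht⟩ → y i ∈ ({-1, 0, 1} : Set ℤ)) ∧
      ∑ i, y i * a i = 0 := by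
  have hbound : a ⟨0, ht⟩ < 2 ^ (Fintype.card (Fin t) - 1) := by
    rw [Fintype.card_fin]
    exact_mod_cast Real.lt_two_pow_of_one_add_logb_lt (by exact_mod_cast ha _) htlog
  exact exists_relation_of_lt_two_pow a (ha _) hbound
end

section
/- Let a = (a₁,…,a_n) ∈ ℤ^n_{>0} and b ∈ ℤ_{≥0}. If the knapsack equation a·x = b has a solution x ∈ ℤ^n_{≥0}, then it has such a solution with ‖x‖₀ ≤ 1 + ⌊log₂(min{a₁,…,a_n} / gcd(a))⌋. -/
/-!
Fix an index `m` and a solution `x` whose support outside `m` is as small as possible, of size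
`k`, and let `g = gcd a`. If `2 ^ k > a m / g`, then two distinct subsets of that support have
sums congruent modulo `a m`, since the subset sums divided by `g` take at most `a m / g` residues.
Removing the intersection leaves disjoint sets `U₁`, `U₂` with `∑ U₂ ≤ ∑ U₁` and
`a m ∣ ∑ U₁ - ∑ U₂`. Moving `t = min_{U₁} x` units off every item of `U₁`, onto every item of
`U₂`, and `t (∑ U₁ - ∑ U₂) / a m` units onto item `m` keeps `x ≥ 0` and `a ⬝ x` unchanged, and
empties a coordinate of `U₁`, which contradicts minimality. Hence `2 ^ k ≤ a m / g`, and choosing `m`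
with `a m` minimal gives the bound.
-/

open Finset

theorem Finset.exists_ne_subsets_sum_modEq_mul {ι : Type*} {a : ι → ℤ} {g : ℤ}
    (hg : ∀ i, g ∣ a i) {d : ℕ} [NeZero d] {S : Finset ι} (h : d < 2 ^ #S) :
    ∃ T₁ ⊆ S, ∃ T₂ ⊆ S, T₁ ≠ T₂ ∧ ∑ i ∈ T₁, a i ≡ ∑ i ∈ T₂, a i [ZMOD g * d] := by
  choose c hc using hg
  obtain ⟨T₁, hT₁, T₂, hT₂, hne, heq⟩ := exists_ne_map_eq_of_card_lt_of_maps_to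
    (s := S.powerset) (t := univ) (f := fun T => ((∑ i ∈ T, c i : ℤ) : ZMod d))
    (by simpa [ZMod.card] using h) fun _ _ => mem_univ _
  refine ⟨T₁, mem_powerset.1 hT₁, T₂, mem_powerset.1 hT₂, hne, ?_⟩
  simp only [hc, ← mul_sum]
  exact ((ZMod.intCast_eq_intCast_iff _ _ _).1 heq).mul_left'

variable {ι : Type*} [Fintype ι] [DecidableEq ι]

def supportOff (m : ι) (x : ι → ℤ) : Finset ι := ({j | x j ≠ 0} : Finset ι).erase m

lemma mem_supportOff {m j : ι} {x : ι → ℤ} : j ∈ supportOff m x ↔ j ≠ m ∧ x j ≠ 0 := by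
  simp [supportOff]

theorem exists_supportOff_card_lt_of_dvd {a : ι → ℤ} {m : ι} (ham : 0 < a m) {x : ι → ℤ}
    (hx : 0 ≤ x) {U₁ U₂ : Finset ι} (hU₁ : U₁ ⊆ supportOff m x) (hU₂ : U₂ ⊆ supportOff m x)
    (hdisj : Disjoint U₁ U₂) (hne : U₁.Nonempty) (hle : ∑ i ∈ U₂, a i ≤ ∑ i ∈ U₁, a i)
    (hdvd : a m ∣ ∑ i ∈ U₁, a i - ∑ i ∈ U₂, a i) :
    ∃ y, 0 ≤ y ∧ ∑ i, a i * y i = ∑ i, a i * x i ∧ #(supportOff m y) < #(supportOff m x) := by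
  obtain ⟨k, hk⟩ := hdvd
  have hk0 : 0 ≤ k := nonneg_of_mul_nonneg_right (hk ▸ sub_nonneg.2 hle) ham
  obtain ⟨i₀, hi₀, ht⟩ := exists_mem_eq_inf' hne x
  set t := U₁.inf' hne x
  have ht0 : 0 ≤ t := le_inf' hne _ fun i _ => hx i
  set y : ι → ℤ := fun j => x j - (if j ∈ U₁ then t else 0) + (if j ∈ U₂ then t else 0)
    + (if j = m then t * k else 0)
  have hyU₁ : ∀ j ∈ U₁, y j = x j - t := fun j hj => by
    simp [y, hj, disjoint_left.1 hdisj hj, (mem_supportOff.1 (hU₁ hj)).1]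
  have hy_off : ∀ j ∉ U₁ ∪ U₂, j ≠ m → y j = x j := fun j hj hjm => by
    simp_all [y]
  refine ⟨y, fun j => ?_, ?_, ?_⟩
  · by_cases hj : j ∈ U₁
    · simpa [hyU₁ j hj] using inf'_le x hj
    · have := hx j
      simp only [y, hj, if_false]
      split_ifs <;> nlinarith
  · simp only [y, mul_add, mul_sub, mul_ite, mul_zero, sum_add_distrib, sum_sub_distrib,
      sum_ite_mem, univ_inter, sum_ite_eq', mem_univ, if_true, ← sum_mul]
    linear_combination (-t) * hk
  · refine (card_le_card fun j hj => ?_).trans_lt (card_erase_lt_of_mem (hU₁ hi₀))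
    rw [mem_supportOff] at hj
    refine mem_erase.2 ⟨?_, ?_⟩
    · rintro rfl
      exact hj.2 (by rw [hyU₁ _ hi₀, ht, sub_self])
    · by_cases hjU : j ∈ U₁ ∪ U₂
      · exact (mem_union.1 hjU).elim (@hU₁ j) (@hU₂ j)
      · exact mem_supportOff.2 ⟨hj.1, hy_off j hjU hj.1 ▸ hj.2⟩

theorem exists_supportOff_card_lt_of_sum_modEq {a : ι → ℤ} (ha : ∀ i, 0 < a i) {m : ι}
    {x : ι → ℤ} (hx : 0 ≤ x) {T₁ T₂ : Finset ι} (hT₁ : T₁ ⊆ supportOff m x)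
    (hT₂ : T₂ ⊆ supportOff m x) (hne : T₁ ≠ T₂)
    (hmod : ∑ i ∈ T₁, a i ≡ ∑ i ∈ T₂, a i [ZMOD a m]) :
    ∃ y, 0 ≤ y ∧ ∑ i, a i * y i = ∑ i, a i * x i ∧ #(supportOff m y) < #(supportOff m x) := by
  wlog hle : ∑ i ∈ T₂ \ T₁, a i ≤ ∑ i ∈ T₁ \ T₂, a i generalizing T₁ T₂
  · exact this hT₂ hT₁ hne.symm hmod.symm (le_of_not_ge hle)
  have hdvd : a m ∣ ∑ i ∈ T₁ \ T₂, a i - ∑ i ∈ T₂ \ T₁, a i := by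
    rw [← sum_inter_add_sum_sdiff T₁ T₂, ← sum_inter_add_sum_sdiff T₂ T₁, inter_comm] at hmod
    exact (hmod.add_left_cancel' _).symm.dvd
  have hnonempty : (T₁ \ T₂).Nonempty := by
    rw [nonempty_iff_ne_empty]
    intro h₁
    have h₂ : T₂ \ T₁ = ∅ := by
      by_contra h₂
      rw [h₁, sum_empty] at hle
      exact (sum_pos (fun i _ => ha i) (nonempty_iff_ne_empty.2 h₂)).not_ge hle
    exact hne (Subset.antisymm (sdiff_eq_empty_iff_subset.1 h₁) (sdiff_eq_empty_iff_subset.1 h₂))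
  exact exists_supportOff_card_lt_of_dvd (ha m) hx (sdiff_subset.trans hT₁)
    (sdiff_subset.trans hT₂) disjoint_sdiff_sdiff hnonempty hle hdvd

theorem exists_solution_two_pow_card_supportOff_le {a : ι → ℤ} (ha : ∀ i, 0 < a i) {g : ℤ}
    (hg : ∀ i, g ∣ a i) {m : ι} {d : ℕ} (hm : a m = g * d) (x : ι → ℤ) (hx : 0 ≤ x) :
    ∃ y, 0 ≤ y ∧ ∑ i, a i * y i = ∑ i, a i * x i ∧ 2 ^ #(supportOff m y) ≤ d := by
  induction hk : #(supportOff m x) using Nat.strong_induction_on generalizing x with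
  | _ k ih =>
  by_cases hpow : 2 ^ k ≤ d
  · exact ⟨x, hx, rfl, hk ▸ hpow⟩
  have : NeZero d := ⟨fun hd => (ha m).ne' (by simp [hm, hd])⟩
  obtain ⟨T₁, hT₁, T₂, hT₂, hne, hmod⟩ :=
    exists_ne_subsets_sum_modEq_mul hg (S := supportOff m x) (hk ▸ not_le.1 hpow)
  rw [← hm] at hmod
  obtain ⟨y, hy, hsum, hcard⟩ := exists_supportOff_card_lt_of_sum_modEq ha hx hT₁ hT₂ hne hmod
  obtain ⟨z, hz, hsum', hpow'⟩ := ih _ (hk ▸ hcard) y hy rfl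
  exact ⟨z, hz, hsum'.trans hsum, hpow'⟩

theorem sparse_solution_positive_knapsack_general {n : ℕ} (hn : 0 < n)
    (a : Fin n → ℤ) (ha : ∀ i, 0 < a i) (b : ℤ)
    (hfeas : ∃ x : Fin n → ℤ, (∀ i, 0 ≤ x i) ∧ ∑ i, a i * x i = b) :
    ∃ x : Fin n → ℤ, (∀ i, 0 ≤ x i) ∧ ∑ i, a i * x i = b ∧
      (Finset.univ.filter fun j => x j ≠ 0).card ≤
        1 + Nat.log 2
          ((Finset.univ.inf' ⟨⟨0, hn⟩, Finset.mem_univ _⟩ fun i => (a i).natAbs) /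
            Finset.univ.gcd fun i => (a i).natAbs) := by
  obtain ⟨x, hx, rfl⟩ := hfeas
  obtain ⟨m, -, hm⟩ := exists_mem_eq_inf' ⟨⟨0, hn⟩, mem_univ _⟩ fun i => (a i).natAbs
  rw [hm]
  set g := univ.gcd fun i => (a i).natAbs
  have hg : ∀ i, (g : ℤ) ∣ a i := fun i => Int.natCast_dvd.2 (gcd_dvd (mem_univ i))
  have ham : a m = g * ((a m).natAbs / g : ℕ) := by
    rw [← Nat.cast_mul, Nat.mul_div_cancel' (Int.natCast_dvd.1 (hg m)),
      Int.natAbs_of_nonneg (ha m).le]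
  obtain ⟨y, hy, hsum, hpow⟩ := exists_solution_two_pow_card_supportOff_le ha hg ham x hx
  refine ⟨y, hy, hsum, ?_⟩
  have hcard := pred_card_le_card_erase (s := {j | y j ≠ 0}) (a := m)
  have hlog := Nat.le_log_of_pow_le one_lt_two hpow
  unfold supportOff at hlog
  omega

/-- Positive knapsack: if `a ∈ ℤ^n_{>0}`, `b ≥ 0`, and `a · x = b` has a non-negative
integer solution, then it has one with `‖x‖₀ ≤ 1 + ⌊log₂(min_i a_i / gcd a)⌋`. -/
theorem sparse_solution_positive_knapsack {n : ℕ} (hn : 0 < n)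
    (a : Fin n → ℤ) (ha : ∀ i, 0 < a i) (b : ℤ) (hb : 0 ≤ b)
    (hfeas : ∃ x : Fin n → ℤ, (∀ i, 0 ≤ x i) ∧ ∑ i, a i * x i = b) :
    ∃ x : Fin n → ℤ, (∀ i, 0 ≤ x i) ∧ ∑ i, a i * x i = b ∧
      (Finset.univ.filter fun j => x j ≠ 0).card ≤
        1 + Nat.log 2
          ((Finset.univ.inf' ⟨⟨0, hn⟩, Finset.mem_univ _⟩ fun i => (a i).natAbs) /
            Finset.univ.gcd fun i => (a i).natAbs) :=
  sparse_solution_positive_knapsack_general hn a ha b hfeas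
end

section
/- Let a = (a₁,…,a_n) ∈ ℤ^n_{>0} with gcd(a₁,…,a_n) = 1, and b ∈ ℤ_{≥0}. Among all solutions x ∈ ℤ^n_{≥0} of a·x = b (assuming one exists), consider one minimizing the number of nonzero entries among coordinates 2,…,n. If x₂,…,x_t > 0 and x_{t+1} = ⋯ = x_n = 0, then t ≤ 1 + log₂(a₁). -/
/-!
Let `I` be the support of `x` outside the first coordinate. If `a₁ < 2 ^ |I|`, two distinct
subsets of `I` have subset sums of `a` congruent modulo `a₁`; removing their intersection gives
disjoint `P, Q ⊆ I` with `∑_P a = ∑_Q a + k a₁`, `k ≥ 0`, `P ≠ ∅`. Shifting `c = min_P x` units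
from every coordinate of `P` to every coordinate of `Q`, and `c k` units to the first coordinate,
keeps `a · x` and `x ≥ 0` but empties a coordinate of `P`, contradicting minimality. Hence
`2 ^ (t - 1) ≤ 2 ^ |I| ≤ a₁`.
-/

open Finset

section SubsetSums

variable {ι : Type*} [DecidableEq ι]

theorem exists_disjoint_dvd_sum_sub_sum (I : Finset ι) (w : ι → ℤ) {m : ℤ} (hm : 0 < m)
    (hI : m < 2 ^ #I) :
    ∃ P ⊆ I, ∃ Q ⊆ I, Disjoint P Q ∧ P ≠ Q ∧ m ∣ ∑ i ∈ P, w i - ∑ i ∈ Q, w i := by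
  have hcard : #(Ico 0 m) < #I.powerset := by
    rw [Int.card_Ico, card_powerset]
    zify
    omega
  obtain ⟨S, hS, T, hT, hST, hmod⟩ := exists_ne_map_eq_of_card_lt_of_maps_to hcard
    (f := fun S => (∑ i ∈ S, w i) % m)
    fun S _ => mem_Ico.2 ⟨Int.emod_nonneg _ hm.ne', Int.emod_lt_of_pos _ hm⟩
  refine ⟨S \ T, sdiff_subset.trans (mem_powerset.1 hS), T \ S,
    sdiff_subset.trans (mem_powerset.1 hT), disjoint_sdiff_sdiff, fun h => hST ?_, ?_⟩
  · have hTS : T \ S = ∅ := disjoint_self.1 (h ▸ disjoint_sdiff_sdiff (x := S) (y := T))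
    exact subset_antisymm (sdiff_eq_empty_iff_subset.1 (h.trans hTS))
      (sdiff_eq_empty_iff_subset.1 hTS)
  · rw [sum_sdiff_sub_sum_sdiff]
    exact Int.ModEq.dvd hmod.symm

theorem exists_disjoint_sum_eq_add_mul (I : Finset ι) {w : ι → ℤ} (hw : ∀ i, 0 < w i) {m : ℤ}
    (hm : 0 < m) (hI : m < 2 ^ #I) :
    ∃ P ⊆ I, ∃ Q ⊆ I, Disjoint P Q ∧ P.Nonempty ∧
      ∃ k, 0 ≤ k ∧ ∑ i ∈ P, w i = ∑ i ∈ Q, w i + m * k := by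
  obtain ⟨P, hP, Q, hQ, hPQ, hne, k, hk⟩ := exists_disjoint_dvd_sum_sub_sum I w hm hI
  wlog hle : ∑ i ∈ Q, w i ≤ ∑ i ∈ P, w i generalizing P Q k
  · exact this Q hQ P hP hPQ.symm hne.symm (-k) (by linarith) (by linarith)
  have hP_ne : P.Nonempty := by
    by_contra hP_empty
    rw [not_nonempty_iff_eq_empty] at hP_empty
    subst hP_empty
    have hQ_empty : Q = ∅ := by
      by_contra hQ_ne
      have := sum_pos (fun i _ => hw i) (nonempty_iff_ne_empty.2 hQ_ne)
      simp only [sum_empty] at hle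
      linarith
    exact hne hQ_empty.symm
  refine ⟨P, hP, Q, hQ, hPQ, hP_ne, k, ?_, by linarith⟩
  nlinarith

theorem exists_nonneg_sum_eq_of_sum_eq_add_mul [Fintype ι] {a x : ι → ℤ} (hx : ∀ i, 0 ≤ x i)
    {P Q : Finset ι} (hPQ : Disjoint P Q) (hP : P.Nonempty) {i₀ : ι} (hi₀ : i₀ ∉ P) {k : ℤ}
    (hk : 0 ≤ k) (hsum : ∑ i ∈ P, a i = ∑ i ∈ Q, a i + a i₀ * k) :
    ∃ x' : ι → ℤ, (∀ i, 0 ≤ x' i) ∧ ∑ i, a i * x' i = ∑ i, a i * x i ∧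
      (∀ i, i ∉ Q → i ≠ i₀ → x' i ≤ x i) ∧ ∃ j ∈ P, x' j = 0 := by
  obtain ⟨j, hjP, hj⟩ := P.exists_min_image x hP
  set c := x j
  refine ⟨fun i => x i - (if i ∈ P then c else 0) + (if i ∈ Q then c else 0)
    + (if i = i₀ then c * k else 0), fun i => ?_, ?_, fun i hiQ hi₀ => ?_, j, hjP, ?_⟩
  · by_cases hiP : i ∈ P
    · simp only [hiP, disjoint_left.1 hPQ hiP, ne_of_mem_of_not_mem hiP hi₀, if_true, if_false]
      linarith [hj i hiP]
    · have := mul_nonneg (hx j) hk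
      simp only [hiP, if_false, sub_zero]
      split_ifs <;> linarith [hx i, hx j]
  · simp only [mul_add, mul_sub, sum_add_distrib, sum_sub_distrib, mul_ite, mul_zero, sum_ite_mem,
      univ_inter, sum_ite_eq', mem_univ, if_true, ← sum_mul, hsum]
    ring
  · simp only [hiQ, hi₀, if_false]
    split_ifs <;> linarith [hx j]
  · simp [hjP, disjoint_left.1 hPQ hjP, ne_of_mem_of_not_mem hjP hi₀, c]

theorem two_pow_card_support_le [Fintype ι] {a x : ι → ℤ}
    (ha : ∀ i, 0 < a i) (hx : ∀ i, 0 ≤ x i) (i₀ : ι)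
    (hmin : ∀ x' : ι → ℤ, (∀ i, 0 ≤ x' i) → ∑ i, a i * x' i = ∑ i, a i * x i →
      #{i | i ≠ i₀ ∧ x i ≠ 0} ≤ #{i | i ≠ i₀ ∧ x' i ≠ 0}) :
    2 ^ #{i | i ≠ i₀ ∧ x i ≠ 0} ≤ a i₀ := by
  by_contra! hlt
  set I : Finset ι := {i | i ≠ i₀ ∧ x i ≠ 0}
  obtain ⟨P, hPI, Q, hQI, hPQ, hP, k, hk, hsum⟩ := exists_disjoint_sum_eq_add_mul I ha (ha i₀) hlt
  have hi₀ : i₀ ∉ P := fun h => (mem_filter.1 (hPI h)).2.1 rfl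
  obtain ⟨x', hx', hsum', hle, j, hjP, hj⟩ :=
    exists_nonneg_sum_eq_of_sum_eq_add_mul hx hPQ hP hi₀ hk hsum
  have hsub : ({i | i ≠ i₀ ∧ x' i ≠ 0} : Finset ι) ⊂ I := by
    refine (ssubset_iff_of_subset fun i hi => ?_).2 ⟨j, hPI hjP, by simp [hj]⟩
    simp only [mem_filter, mem_univ, true_and, I] at hi ⊢
    by_cases hiQ : i ∈ Q
    · exact (mem_filter.1 (hQI hiQ)).2
    · exact ⟨hi.1, (lt_of_lt_of_le ((hx' i).lt_of_ne' hi.2) (hle i hiQ hi.1)).ne'⟩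
  exact (card_lt_card hsub).not_ge (hmin x' hx' hsum')

end SubsetSums

theorem minimal_support_bound_general {n : ℕ} (hn : 0 < n) (a : Fin n → ℤ)
    (ha : ∀ i, 0 < a i)
    (b : ℤ)
    (x : Fin n → ℤ) (hx0 : ∀ i, 0 ≤ x i) (hxb : ∑ i, a i * x i = b)
    (hmin : ∀ x' : Fin n → ℤ, (∀ i, 0 ≤ x' i) → ∑ i, a i * x' i = b →
      (Finset.univ.filter fun i : Fin n => 1 ≤ i.val ∧ x i ≠ 0).card ≤
        (Finset.univ.filter fun i : Fin n => 1 ≤ i.val ∧ x' i ≠ 0).card)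
    (t : ℕ) (htn : t ≤ n)
    (hpos : ∀ i : Fin n, 1 ≤ i.val → i.val < t → 0 < x i) :
    (t : ℝ) ≤ 1 + Real.logb 2 (a ⟨0, hn⟩) := by
  set i₀ : Fin n := ⟨0, hn⟩
  have one_le_iff : ∀ i : Fin n, 1 ≤ i.val ↔ i ≠ i₀ := fun i => by
    simp [i₀, Fin.ext_iff, Nat.one_le_iff_ne_zero]
  simp only [one_le_iff] at hmin hpos
  have hsupp := two_pow_card_support_le ha hx0 i₀ fun x' hx' hsum => hmin x' hx' (hsum.trans hxb)
  have hcard : t - 1 ≤ #{i | i ≠ i₀ ∧ x i ≠ 0} := by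
    have hIco : ∀ m ∈ Ico 1 t, m < n := fun m hm => (mem_Ico.1 hm).2.trans_le htn
    calc t - 1 = #((Ico 1 t).attachFin hIco) := by rw [card_attachFin, Nat.card_Ico]
      _ ≤ _ := card_le_card fun i hi => by
        rw [mem_attachFin, mem_Ico, one_le_iff] at hi
        simpa using ⟨hi.1, (hpos i hi.1 hi.2).ne'⟩
  have hpow : (2 : ℝ) ^ ((t - 1 : ℕ) : ℝ) ≤ a i₀ := by
    rw [Real.rpow_natCast]
    exact_mod_cast (pow_le_pow_right₀ one_le_two hcard).trans hsupp
  have hlog := (Real.le_logb_iff_rpow_le one_lt_two (by exact_mod_cast ha i₀)).2 hpow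
  have ht : (t : ℝ) ≤ (t - 1 : ℕ) + 1 := by norm_cast; omega
  linarith

/-- Key counting step for positive knapsacks: let `a ∈ ℤ^n_{>0}` with `gcd(a) = 1` and
`b ≥ 0`. If `x` is a non-negative solution of `a · x = b` minimizing the number of nonzero
entries among the coordinates after the first, and the coordinates `2, …, t` of `x` are
positive while coordinates `t+1, …, n` vanish, then `t ≤ 1 + log₂ a₁`.
(Coordinates are `0`-indexed: index `0` is the first coordinate.) -/
theorem minimal_support_bound {n : ℕ} (hn : 0 < n) (a : Fin n → ℤ)
    (ha : ∀ i, 0 < a i) (hgcd : (Finset.univ.gcd fun i => (a i).natAbs) = 1)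
    (b : ℤ) (hb : 0 ≤ b)
    (x : Fin n → ℤ) (hx0 : ∀ i, 0 ≤ x i) (hxb : ∑ i, a i * x i = b)
    (hmin : ∀ x' : Fin n → ℤ, (∀ i, 0 ≤ x' i) → ∑ i, a i * x' i = b →
      (Finset.univ.filter fun i : Fin n => 1 ≤ i.val ∧ x i ≠ 0).card ≤
        (Finset.univ.filter fun i : Fin n => 1 ≤ i.val ∧ x' i ≠ 0).card)
    (t : ℕ) (ht1 : 1 ≤ t) (htn : t ≤ n)
    (hpos : ∀ i : Fin n, 1 ≤ i.val → i.val < t → 0 < x i)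
    (hzero : ∀ i : Fin n, t ≤ i.val → x i = 0) :
    (t : ℝ) ≤ 1 + Real.logb 2 (a ⟨0, hn⟩) :=
  minimal_support_bound_general hn a ha b x hx0 hxb hmin t htn hpos
end

section
/- For every Δ ∈ ℤ_{≥2} and m ≥ 1, there exists a diagonal matrix B ∈ ℤ^{m×m} with positive diagonal entries and det(B) = Δ such that the number κ(ℤ^m / ℒ(B)) of primary cyclic summands of ℤ^m / ℒ(B) equals Ω_m(Δ). -/
open Finset

def splitExponent (m e : ℕ) (i : Fin m) : ℕ :=
  (if (i : ℕ) = 0 then e - min e m else 0) + if (i : ℕ) < min e m then 1 else 0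

theorem sum_splitExponent {m : ℕ} (hm : m ≠ 0) (e : ℕ) : ∑ i, splitExponent m e i = e := by
  have hexcess : ∑ i : Fin m, (if (i : ℕ) = 0 then e - min e m else 0) = e - min e m := by
    rw [Fintype.sum_eq_single ⟨0, Nat.pos_of_ne_zero hm⟩ fun i hi =>
      if_neg (Fin.ext_iff.not.mp hi)]
    rfl
  simp only [splitExponent, sum_add_distrib, hexcess, sum_boole, Fin.card_filter_val_lt,
    min_eq_right (min_le_right e m), Nat.cast_id]
  omega

theorem splitExponent_ne_zero_iff {m e : ℕ} {i : Fin m} :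
    splitExponent m e i ≠ 0 ↔ (i : ℕ) < min e m := by
  have := i.pos
  unfold splitExponent
  split_ifs <;> omega

theorem card_splitExponent_ne_zero (m e : ℕ) : #{i | splitExponent m e i ≠ 0} = min e m := by
  simp only [splitExponent_ne_zero_iff, Fin.card_filter_val_lt, min_eq_right (min_le_right e m)]

noncomputable def splitFactorization (m n : ℕ) (i : Fin m) : ℕ →₀ ℕ :=
  n.factorization.mapRange (fun e => splitExponent m e i) (by simp [splitExponent])

noncomputable def splitFactor (m n : ℕ) (i : Fin m) : ℕ :=
  (splitFactorization m n i).prod (· ^ ·)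

theorem support_splitFactorization (m n : ℕ) (i : Fin m) :
    (splitFactorization m n i).support =
      {p ∈ n.primeFactors | splitExponent m (n.factorization p) i ≠ 0} := by
  ext p
  simp only [splitFactorization, Finsupp.mem_support_iff, Finsupp.mapRange_apply, mem_filter,
    ← Nat.support_factorization]
  exact ⟨fun h => ⟨fun hp => h (by simp [hp, splitExponent]), h⟩, And.right⟩

theorem prime_of_mem_support_splitFactorization {m n p : ℕ} {i : Fin m}
    (hp : p ∈ (splitFactorization m n i).support) : p.Prime := by
  rw [support_splitFactorization] at hp
  exact Nat.prime_of_mem_primeFactors (mem_filter.mp hp).1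

theorem factorization_splitFactor (m n : ℕ) (i : Fin m) :
    (splitFactor m n i).factorization = splitFactorization m n i :=
  Nat.prod_pow_factorization_eq_self fun _ => prime_of_mem_support_splitFactorization

theorem splitFactor_ne_zero (m n : ℕ) (i : Fin m) : splitFactor m n i ≠ 0 :=
  Finsupp.prod_ne_zero_iff.mpr fun _ hp =>
    pow_ne_zero _ (prime_of_mem_support_splitFactorization hp).ne_zero

theorem prod_splitFactor {m n : ℕ} (hm : m ≠ 0) (hn : n ≠ 0) : ∏ i, splitFactor m n i = n := by
  refine Nat.eq_of_factorization_eq (prod_ne_zero_iff.mpr fun i _ => splitFactor_ne_zero m n i) hn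
    fun p => ?_
  rw [Nat.factorization_prod fun i _ => splitFactor_ne_zero m n i, Finsupp.finsetSum_apply]
  simp only [factorization_splitFactor, splitFactorization, Finsupp.mapRange_apply]
  exact sum_splitExponent hm _

theorem sum_card_primeFactors_splitFactor (m n : ℕ) :
    ∑ i, #(splitFactor m n i).primeFactors = truncatedOmega m n := by
  simp only [← Nat.support_factorization, factorization_splitFactor, support_splitFactorization]
  exact (sum_card_bipartiteAbove_eq_sum_card_bipartiteBelow
    (r := fun i p => splitExponent m (n.factorization p) i ≠ 0)).trans
    (sum_congr rfl fun p _ => card_splitExponent_ne_zero m _)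

theorem Submodule.span_range_pi_single {R ι : Type*} [Semiring R] [Finite ι] [DecidableEq ι]
    (v : ι → R) :
    span R (Set.range fun i => Pi.single (M := fun _ => R) i (v i)) =
      pi Set.univ fun i => span R {v i} := by
  rw [← iSup_map_single, ← Set.iUnion_singleton_eq_range, span_iUnion]
  congr! with i
  rw [map_span, Set.image_singleton]
  rfl

theorem Matrix.span_range_transpose_diagonal {R ι : Type*} [Semiring R] [Finite ι]
    [DecidableEq ι] (v : ι → R) :
    Submodule.span R (Set.range fun j => (diagonal v).transpose j) =
      Submodule.pi Set.univ fun i => Submodule.span R {v i} := by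
  simpa only [← col_def, col_diagonal] using Submodule.span_range_pi_single v

noncomputable def quotientSpanDiagonalAddEquiv {ι : Type*} [Fintype ι] [DecidableEq ι]
    (d : ι → ℕ) :
    ((ι → ℤ) ⧸ Submodule.span ℤ
        (Set.range fun j => (Matrix.diagonal fun i => (d i : ℤ)).transpose j)) ≃+
      ((i : ι) → ZMod (d i)) :=
  ((Submodule.quotEquivOfEq _ _ (Matrix.span_range_transpose_diagonal _)).trans
    (Submodule.quotientPi _)).toAddEquiv.trans
    (AddEquiv.piCongrRight fun i => (Int.quotientSpanNatEquivZMod (d i)).toAddEquiv)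

theorem exists_addEquiv_pi_zmod_isPrimePow {ι : Type*} [Fintype ι] {d : ι → ℕ}
    (hd : ∀ i, d i ≠ 0) :
    ∃ q : Fin (∑ i, #(d i).primeFactors) → ℕ, (∀ j, IsPrimePow (q j)) ∧
      Nonempty (((i : ι) → ZMod (d i)) ≃+ ((j : Fin (∑ i, #(d i).primeFactors)) → ZMod (q j))) := by
  let e : (Σ i, (d i).primeFactors) ≃ Fin (∑ i, #(d i).primeFactors) :=
    Fintype.equivFinOfCardEq (by simp)
  let q : (Σ i, (d i).primeFactors) → ℕ := fun x => (x.2 : ℕ) ^ (d x.1).factorization x.2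
  have hq : ∀ x, IsPrimePow (q x) := fun ⟨_, _, hp⟩ =>
    (Nat.prime_of_mem_primeFactors hp).isPrimePow.pow (Finsupp.mem_support_iff.mp hp)
  exact ⟨q ∘ e.symm, fun j => hq (e.symm j),
    ⟨(AddEquiv.piCongrRight fun i => (ZMod.equivPi _ (hd i)).toAddEquiv).trans
      ((LinearEquiv.piCurry ℤ fun i (p : (d i).primeFactors) => ZMod (q ⟨i, p⟩)).symm.trans
        (LinearEquiv.piCongrLeft' ℤ (fun x => ZMod (q x)) e)).toAddEquiv⟩⟩

/-- Optimality of the sparsification bound: for every `Δ ≥ 2` and `m ≥ 1` there is a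
diagonal matrix `B ∈ ℤ^{m×m}` with positive diagonal and `det B = Δ` such that the primary
decomposition of `ℤ^m / ℒ(B)` has exactly `Ω_m(Δ)` (nontrivial prime-power cyclic)
summands. -/
theorem exists_diagonal_with_kappa_eq_truncatedOmega (Δ m : ℕ) (hΔ : 2 ≤ Δ) (hm : 1 ≤ m) :
    ∃ d : Fin m → ℕ, (∀ i, 0 < d i) ∧ (∏ i, d i = Δ) ∧
      ∃ (k : ℕ) (q : Fin k → ℕ), k = truncatedOmega m Δ ∧ (∀ i, IsPrimePow (q i)) ∧
        Nonempty
          (((Fin m → ℤ) ⧸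
              Submodule.span ℤ
                (Set.range fun j => (Matrix.diagonal fun i => (d i : ℤ)).transpose j)) ≃+
            ((i : Fin k) → ZMod (q i))) := by
  obtain ⟨q, hq, ⟨e⟩⟩ := exists_addEquiv_pi_zmod_isPrimePow (splitFactor_ne_zero m Δ)
  exact ⟨splitFactor m Δ, fun i => Nat.pos_of_ne_zero (splitFactor_ne_zero m Δ i),
    prod_splitFactor (by omega) (by omega), _, q, sum_card_primeFactors_splitFactor m Δ, hq,
    ⟨(quotientSpanDiagonalAddEquiv _).trans e⟩⟩
end
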